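/- arXiv:2502.09418 — 6 statements merged into one kernel-verified Lean document; each statement's English description precedes it below -/
import Mathlib

section
/- Let R ⊆ D be an extension of commutative rings. If the conductor (R : D) = {x ∈ T(D) : x·D ⊆ R} contains a regular element of D, then T(R) = T(D); that is, R^• ⊆ D^• and every element of T(D) can be written as r·s⁻¹ with r ∈ R and s ∈ R^•. -/
namespace Paper

/-- The set of regular elements of a subset `A` of an ambient commutative ring `T`:
the elements of `A` that are non-zero-divisors on `A`. -/
def reg {T : Type*} [CommRing T] (A : Set T) : Set T :=
  {x | x ∈ A ∧ ∀ y ∈ A, x * y = 0 → y = 0}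

/-- The units of a subset `A`: the elements of `A` having an inverse in `A`. -/
def unitsIn {T : Type*} [CommRing T] (A : Set T) : Set T :=
  {x | x ∈ A ∧ ∃ y ∈ A, x * y = 1}

/-- The conductor `(R : D) = {x ∈ T : x·D ⊆ R}`, taken inside the ambient ring
`T`, which plays the role of the total quotient ring. -/
def conductor {T : Type*} [CommRing T] (R D : Subring T) : Set T :=
  {x : T | ∀ d ∈ (D : Set T), x * d ∈ R}

/-- Let `R ⊆ D` be rings, with ambient ring `T = T(D)` (regular
elements of `D` are units of `T` and every element of `T` is a fraction over `D`).
If the conductor `(R : D)` contains a regular element of `D`, then `T(R) = T(D)`: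
`R^• ⊆ D^•` and every element of `T` is of the form `r·s⁻¹` with `r ∈ R`,
`s ∈ R^•`. -/
theorem stmt3 {T : Type*} [CommRing T] [Nontrivial T] (R D : Subring T) (hRD : R ≤ D)
    (hDreg : ∀ x ∈ reg (D : Set T), IsUnit x)
    (hDfr : ∀ t : T, ∃ d ∈ (D : Set T), ∃ s ∈ reg (D : Set T), t * s = d)
    (hcond : ∃ x ∈ reg (D : Set T), x ∈ conductor R D) :
    reg (R : Set T) ⊆ reg (D : Set T) ∧
      ∀ t : T, ∃ r ∈ (R : Set T), ∃ s ∈ reg (R : Set T), t * s = r := by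
  obtain ⟨c, ⟨hcD, hcreg⟩, hccond⟩ := hcond
  constructor
  · rintro x ⟨hxR, hxreg⟩
    refine ⟨hRD hxR, fun y hyD hxy => ?_⟩
    have hcy : c * y ∈ R := hccond y hyD
    have h0 : x * (c * y) = 0 := by rw [show x * (c * y) = c * (x * y) by ring, hxy, mul_zero]
    exact hcreg y hyD (hxreg _ hcy h0)
  · intro t
    obtain ⟨d, hdD, s, ⟨hsD, hsreg⟩, hts⟩ := hDfr t
    refine ⟨c * d, hccond d hdD, c * s, ⟨hccond s hsD, fun y hyR hy => ?_⟩, by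
      rw [← mul_assoc, mul_comm t c, mul_assoc, hts]⟩
    have hcyD : c * y ∈ (D : Set T) := hRD (hccond y (hRD hyR))
    have : s * (c * y) = 0 := by rw [show s * (c * y) = c * s * y by ring, hy]
    have hcy0 := hsreg _ hcyD this
    exact hcreg y (hRD hyR) hcy0

end Paper
end

section
/- Let R ⊆ D be an extension of commutative rings with T(R) = T(D) and D = R·D^×. Then (R : D) ∩ T(D)^× = (R^• : D^•), where (R^• : D^•) = {a ∈ T(D)^× : a·D^• ⊆ R^•}. -/
namespace Paper

/-- Let `R ⊆ D` with `T(R) = T(D)` and `D = R·D^×`. Then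
`(R : D) ∩ T(D)^× = (R^• : D^•)`, where the latter is the set of units `a` of the
total quotient ring with `a·D^• ⊆ R^•`. -/
theorem stmt4 {T : Type*} [CommRing T] [Nontrivial T] (R D : Subring T) (hRD : R ≤ D)
    (hDreg : ∀ x ∈ reg (D : Set T), IsUnit x)
    (hRreg : reg (R : Set T) ⊆ reg (D : Set T))
    (hRfr : ∀ t : T, ∃ r ∈ (R : Set T), ∃ s ∈ reg (R : Set T), t * s = r)
    (hgen : ∀ d ∈ (D : Set T), ∃ r ∈ (R : Set T), ∃ u ∈ unitsIn (D : Set T), d = r * u) :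
    conductor R D ∩ {x : T | IsUnit x}
      = {a : T | IsUnit a ∧ ∀ d ∈ reg (D : Set T), a * d ∈ reg (R : Set T)} := by
  ext a
  simp only [Set.mem_inter_iff, Set.mem_setOf_eq, conductor]
  constructor
  · rintro ⟨hc, hu⟩
    refine ⟨hu, fun d hd => ⟨hc d hd.1, fun y _ h0 => ?_⟩⟩
    have hud : IsUnit (a * d) := hu.mul (hDreg d hd)
    exact (IsUnit.mul_right_eq_zero hud).mp h0
  · rintro ⟨hu, h⟩
    refine ⟨fun d hd => ?_, hu⟩
    obtain ⟨r, hr, u, hu', heq⟩ := hgen d hd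
    obtain ⟨huD, v, hvD, hinv⟩ := hu'
    have hureg : u ∈ reg (D : Set T) := by
      refine ⟨huD, fun y hy h0 => ?_⟩
      calc y = v * (u * y) := by rw [← mul_assoc, mul_comm v u, hinv, one_mul]
        _ = 0 := by rw [h0, mul_zero]
    have hau : a * u ∈ (R : Set T) := (h u hureg).1
    have : a * d = r * (a * u) := by rw [heq]; ring
    rw [this]
    exact mul_mem hr hau

end Paper
end

section
/- Let D be a commutative ring and R ⊆ D a subring with T(R) = T(D) such that D = R·D^×, D^× ∩ R = R^×, and (R : D) is a maximal v-ideal of R (i.e. (R : D) is maximal among proper integral v-ideals of R). Then the inclusion R^• ↪ D^• is a transfer homomorphism. -/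
namespace Paper

/-- `(R : X) = {z ∈ T : z·X ⊆ R}`. -/
def colonS {T : Type*} [CommRing T] (R : Subring T) (X : Set T) : Set T :=
  {z : T | ∀ x ∈ X, z * x ∈ R}

/-- The `v`-operation `X ↦ X_v = (X⁻¹)⁻¹ = (R : (R : X))`. -/
def vOp {T : Type*} [CommRing T] (R : Subring T) (X : Set T) : Set T :=
  colonS R (colonS R X)

/-- An integral `v`-ideal (divisorial ideal) of `R`. -/
def IsVIdeal {T : Type*} [CommRing T] (R : Subring T) (I : Set T) : Prop :=
  I ⊆ (R : Set T) ∧ vOp R I = I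

/-- A maximal `v`-ideal of `R`: maximal among proper integral `v`-ideals of `R`. -/
def IsMaxVIdeal {T : Type*} [CommRing T] (R : Subring T) (I : Set T) : Prop :=
  IsVIdeal R I ∧ I ≠ (R : Set T) ∧
    ∀ J : Set T, IsVIdeal R J → J ≠ (R : Set T) → I ⊆ J → J = I

/-- The inclusion of the multiplicative monoid `H` into `B` (both viewed as
submonoids of the ambient ring) is a transfer homomorphism:
(T1) `B = H·B^×` and `H ∩ B^× = H^×`;
(T2) every factorization `u = b·c` in `B` of an element `u ∈ H` lifts to a
factorization `u = v·w` in `H` with `v`, `w` associated to `b`, `c`. -/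
def IsTransferIncl {T : Type*} [CommRing T] (H B : Set T) : Prop :=
  (B = {x | ∃ a ∈ H, ∃ u ∈ unitsIn B, x = a * u}) ∧
  (H ∩ unitsIn B = unitsIn H) ∧
  ∀ u ∈ H, ∀ b ∈ B, ∀ c ∈ B, u = b * c →
    ∃ v ∈ H, ∃ w ∈ H, ∃ ε ∈ unitsIn B, ∃ η ∈ unitsIn B,
      u = v * w ∧ v = b * ε ∧ w = c * η

section Aux

variable {T : Type*} [CommRing T]

lemma unitsIn_subset_reg (A : Set T) : unitsIn A ⊆ reg A := by
  rintro x ⟨hxA, y, hyA, hxy⟩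
  refine ⟨hxA, fun z _ h0 => ?_⟩
  calc z = y * (x * z) := by rw [show y * (x * z) = (x * y) * z by ring, hxy, one_mul]
    _ = 0 := by rw [h0, mul_zero]

lemma unitsIn_reg (A : Set T) : unitsIn (reg A) = unitsIn A := by
  ext x
  constructor
  · rintro ⟨hx, y, hy, hxy⟩; exact ⟨hx.1, y, hy.1, hxy⟩
  · rintro ⟨hx, y, hy, hxy⟩
    exact ⟨unitsIn_subset_reg A ⟨hx, y, hy, hxy⟩, y,
      unitsIn_subset_reg A ⟨hy, x, hx, by rw [mul_comm]; exact hxy⟩, hxy⟩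

lemma reg_mul (D : Subring T) {b c : T} (hb : b ∈ reg (D : Set T))
    (hc : c ∈ reg (D : Set T)) : b * c ∈ reg (D : Set T) := by
  refine ⟨D.mul_mem hb.1 hc.1, fun z hz h0 => ?_⟩
  exact hc.2 z hz (hb.2 (c * z) (D.mul_mem hc.1 hz) (by rw [← mul_assoc]; exact h0))

lemma colon_antitone (R : Subring T) {X Y : Set T} (h : X ⊆ Y) :
    colonS R Y ⊆ colonS R X := fun z hz x hx => hz x (h hx)

lemma subset_vOp (R : Subring T) (X : Set T) : X ⊆ vOp R X :=
  fun x hx z hz => by rw [mul_comm]; exact hz x hx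

lemma colon_vOp (R : Subring T) (X : Set T) : colonS R (vOp R X) = colonS R X :=
  Set.Subset.antisymm (colon_antitone R (subset_vOp R X)) (subset_vOp R (colonS R X))

lemma colon_self (R : Subring T) : colonS R (R : Set T) = (R : Set T) := by
  ext z
  constructor
  · intro hz; simpa using hz 1 R.one_mem
  · intro hz x hx; exact R.mul_mem hz hx

/-- If an element of `D` that is regular on `D` lies in `R ⊆ D`, it is regular on `R`. -/
lemma reg_of_mem (R D : Subring T) (hRD : R ≤ D) {x : T} (hx : x ∈ reg (D : Set T))
    (hxR : x ∈ R) : x ∈ reg (R : Set T) :=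
  ⟨hxR, fun y hy h0 => hx.2 y (hRD hy) h0⟩

end Aux

/-- Let `R ⊆ D` with `T(R) = T(D)`, `D = R·D^×`, `D^× ∩ R = R^×`,
and `(R : D)` a maximal `v`-ideal of `R`. Then the inclusion `R^• ↪ D^•` is a
transfer homomorphism. -/
theorem stmt5 {T : Type*} [CommRing T] [Nontrivial T] (R D : Subring T) (hRD : R ≤ D)
    (hDreg : ∀ x ∈ reg (D : Set T), IsUnit x)
    (hRreg : reg (R : Set T) ⊆ reg (D : Set T))
    (hRfr : ∀ t : T, ∃ r ∈ (R : Set T), ∃ s ∈ reg (R : Set T), t * s = r)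
    (hgen : ∀ d ∈ (D : Set T), ∃ r ∈ (R : Set T), ∃ u ∈ unitsIn (D : Set T), d = r * u)
    (hun : unitsIn (D : Set T) ∩ (R : Set T) = unitsIn (R : Set T))
    (hmax : IsMaxVIdeal R (conductor R D)) :
    IsTransferIncl (reg (R : Set T)) (reg (D : Set T)) := by
  -- decomposition of regular elements of D
  have decomp : ∀ d ∈ reg (D : Set T), ∃ r ∈ reg (R : Set T), ∃ ε ∈ (D : Set T),
      ∃ ε' ∈ (D : Set T), ε * ε' = 1 ∧ d = r * ε := by
    intro d hd
    obtain ⟨r, hr, ε, ⟨hε, ε', hε', hεε'⟩, hde⟩ := hgen d hd.1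
    have hε'u : ε' ∈ unitsIn (D : Set T) := ⟨hε', ε, hε, by rw [mul_comm]; exact hεε'⟩
    have hre : r = d * ε' := by
      rw [hde, mul_assoc, hεε', mul_one]
    have hrd : r ∈ reg (D : Set T) := by
      rw [hre]; exact reg_mul D hd (unitsIn_subset_reg _ hε'u)
    exact ⟨r, reg_of_mem R D hRD hrd hr, ε, hε, ε', hε', hεε', hde⟩
  refine ⟨?_, ?_, ?_⟩
  · -- T1: B = H · B^×
    ext x
    constructor
    · intro hx
      obtain ⟨r, hr, ε, hε, ε', hε', hεε', hde⟩ := decomp x hx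
      exact ⟨r, hr, ε, (unitsIn_reg (D : Set T)).symm ▸ ⟨hε, ε', hε', hεε'⟩, hde⟩
    · rintro ⟨a, ha, e, he, rfl⟩
      have he' : e ∈ unitsIn (D : Set T) := (unitsIn_reg (D : Set T)) ▸ he
      exact reg_mul D (hRreg ha) (unitsIn_subset_reg _ he')
  · -- units condition
    rw [unitsIn_reg, unitsIn_reg]
    ext x
    constructor
    · rintro ⟨hx, hxu⟩
      exact hun ▸ (⟨hxu, hx.1⟩ : x ∈ unitsIn (D : Set T) ∩ (R : Set T))
    · intro hx
      have hx' : x ∈ unitsIn (D : Set T) ∩ (R : Set T) := hun ▸ hx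
      obtain ⟨hxR, y, hyR, hxy⟩ := hx
      exact ⟨⟨hxR, fun z hz h0 => by
        calc z = y * (x * z) := by
              rw [show y * (x * z) = (x * y) * z by ring, hxy, one_mul]
          _ = 0 := by rw [h0, mul_zero]⟩, hx'.1⟩
  · -- T2
    intro u hu b hb c hc huv
    obtain ⟨b₁, hb₁, ε, hε, ε', hε', hεε', hbe⟩ := decomp b hb
    obtain ⟨c₁, hc₁, η, hη, η', hη', hηη', hce⟩ := decomp c hc
    have hεu : ε ∈ unitsIn (reg (D : Set T)) :=
      (unitsIn_reg (D : Set T)).symm ▸ ⟨hε, ε', hε', hεε'⟩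
    have hε'u : ε' ∈ unitsIn (reg (D : Set T)) :=
      (unitsIn_reg (D : Set T)).symm ▸ ⟨hε', ε, hε, by rw [mul_comm]; exact hεε'⟩
    have hηu : η ∈ unitsIn (reg (D : Set T)) :=
      (unitsIn_reg (D : Set T)).symm ▸ ⟨hη, η', hη', hηη'⟩
    have hη'u : η' ∈ unitsIn (reg (D : Set T)) :=
      (unitsIn_reg (D : Set T)).symm ▸ ⟨hη', η, hη, by rw [mul_comm]; exact hηη'⟩
    have hu' : u = b₁ * c₁ * (ε * η) := by rw [huv, hbe, hce]; ring
    by_cases hbf : b₁ ∈ conductor R D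
    · -- b₁ in the conductor: take v = b₁ * (ε*η) = b*η, w = c₁ = c*η'
      have hvR : b₁ * (ε * η) ∈ R := hbf (ε * η) (D.mul_mem hε hη)
      have hvb : b₁ * (ε * η) = b * η := by rw [hbe]; ring
      have hvreg : b₁ * (ε * η) ∈ reg (D : Set T) := by
        rw [hvb]; exact reg_mul D hb (unitsIn_subset_reg _ ((unitsIn_reg (D : Set T)) ▸ hηu))
      refine ⟨b₁ * (ε * η), reg_of_mem R D hRD hvreg hvR, c₁, hc₁, η, hηu, η', hη'u,
        by rw [hu']; ring, hvb, ?_⟩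
      rw [hce, mul_assoc, hηη', mul_one]
    · -- b₁ not in the conductor: use maximality to show c₁ * (ε*η) ∈ R
      have hfR : conductor R D ⊆ (R : Set T) := hmax.1.1
      set X : Set T := conductor R D ∪ {b₁} with hX
      have hXR : X ⊆ (R : Set T) := by
        rintro x (hx | hx)
        · exact hfR hx
        · rw [Set.mem_singleton_iff] at hx; rw [hx]; exact hb₁.1
      have hKR : vOp R X ⊆ (R : Set T) := by
        have h1 : (R : Set T) ⊆ colonS R X := by
          intro z hz x hx; exact R.mul_mem hz (hXR hx)
        have := colon_antitone R h1
        rw [colon_self] at this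
        exact this
      have hKv : IsVIdeal R (vOp R X) := by
        refine ⟨hKR, ?_⟩
        show colonS R (colonS R (vOp R X)) = vOp R X
        rw [colon_vOp]; rfl
      have hfK : conductor R D ⊆ vOp R X :=
        Set.Subset.trans Set.subset_union_left (subset_vOp R X)
      have hKall : vOp R X = (R : Set T) := by
        by_contra hne
        have := hmax.2.2 _ hKv hne hfK
        exact hbf (this ▸ subset_vOp R X (Or.inr rfl))
      have hcX : colonS R X = (R : Set T) := by
        rw [← colon_vOp R X, hKall, colon_self]
      have hz : c₁ * (ε * η) ∈ colonS R X := by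
        rintro x (hx | hx)
        · -- x in conductor : (c₁ * (ε*η)) * x = c₁ * (x * (ε*η)) ∈ R
          have : x * (ε * η) ∈ R := hx (ε * η) (D.mul_mem hε hη)
          have h2 : c₁ * (ε * η) * x = c₁ * (x * (ε * η)) := by ring
          rw [h2]; exact R.mul_mem hc₁.1 this
        · rw [Set.mem_singleton_iff] at hx
          rw [hx, show c₁ * (ε * η) * b₁ = b₁ * c₁ * (ε * η) by ring, ← hu']
          exact hu.1
      have hwR : c₁ * (ε * η) ∈ (R : Set T) := by rw [← hcX]; exact hz
      have hwc : c₁ * (ε * η) = c * ε := by rw [hce]; ring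
      have hwreg : c₁ * (ε * η) ∈ reg (D : Set T) := by
        rw [hwc]; exact reg_mul D hc (unitsIn_subset_reg _ ((unitsIn_reg (D : Set T)) ▸ hεu))
      refine ⟨b₁, hb₁, c₁ * (ε * η), reg_of_mem R D hRD hwreg hwR, ε', hε'u, ε, hεu,
        by rw [hu']; ring, ?_, hwc⟩
      rw [hbe, mul_assoc, hεε', mul_one]

end Paper
end

section
/- Let D be a commutative ring, m ≠ {0} a maximal ideal of D, and L ⊆ D a subring that is a field with D = L + m. Let K ⊊ L be a subring of L that is a field, and set R = K + m. If T(R) = T(D), then D = R·D^×, D^× ∩ R = R^×, and (R : D) = m, and m is a maximal ideal of R. -/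
namespace Paper

/-- `M` is an `R`-submodule of the ambient ring `T`. -/
def IsSubmoduleOf {T : Type*} [CommRing T] (R : Subring T) (M : Set T) : Prop :=
  (0 : T) ∈ M ∧ (∀ x ∈ M, ∀ y ∈ M, x + y ∈ M) ∧
    ∀ r ∈ (R : Set T), ∀ x ∈ M, r * x ∈ M

/-- `I` is an (integral) ideal of the subring `R`. -/
def IsIdealOf {T : Type*} [CommRing T] (R : Subring T) (I : Set T) : Prop :=
  IsSubmoduleOf R I ∧ I ⊆ (R : Set T)

/-- `I` is a maximal ideal of the subring `R`. -/
def IsMaxIdealOf {T : Type*} [CommRing T] (R : Subring T) (I : Set T) : Prop :=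
  IsIdealOf R I ∧ I ≠ (R : Set T) ∧
    ∀ J : Set T, IsIdealOf R J → I ⊆ J → J ≠ (R : Set T) → J = I

/-- the `D + M` construction: let `m ≠ {0}` be a maximal ideal of
`D`, `L ⊆ D` a subfield with `D = L + m`, `K ⊊ L` a subfield, and `R = K + m`.
If `T(R) = T(D)`, then `D = R·D^×`, `D^× ∩ R = R^×`, `(R : D) = m`, and `m` is a
maximal ideal of `R`. -/
theorem stmt8 {T : Type*} [CommRing T] [Nontrivial T] (D : Subring T)
    (hDreg : ∀ x ∈ reg (D : Set T), IsUnit x)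
    (hDfr : ∀ t : T, ∃ d ∈ (D : Set T), ∃ s ∈ reg (D : Set T), t * s = d)
    (m : Set T) (hmax : IsMaxIdealOf D m) (hm0 : m ≠ ({0} : Set T))
    (L K R : Subring T) (hLD : L ≤ D)
    (hLfield : ∀ x ∈ (L : Set T), x ≠ 0 → ∃ y ∈ (L : Set T), x * y = 1)
    (hKL : K ≤ L) (hKne : (K : Set T) ≠ (L : Set T))
    (hKfield : ∀ x ∈ (K : Set T), x ≠ 0 → ∃ y ∈ (K : Set T), x * y = 1)
    (hDsum : ∀ d ∈ (D : Set T), ∃ l ∈ (L : Set T), ∃ x ∈ m, d = l + x)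
    (hRcar : (R : Set T) = {x : T | ∃ k ∈ (K : Set T), ∃ y ∈ m, x = k + y})
    (hRreg : reg (R : Set T) ⊆ reg (D : Set T))
    (hRfr : ∀ t : T, ∃ r ∈ (R : Set T), ∃ s ∈ reg (R : Set T), t * s = r) :
    (∀ d ∈ (D : Set T), ∃ r ∈ (R : Set T), ∃ u ∈ unitsIn (D : Set T), d = r * u) ∧
      unitsIn (D : Set T) ∩ (R : Set T) = unitsIn (R : Set T) ∧
      conductor R D = m ∧ IsMaxIdealOf R m := by
  obtain ⟨⟨⟨hm0mem, hm_add, hm_smul⟩, hm_sub⟩, hmne, -⟩ := hmax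
  -- negation and subtraction in m
  have hm_neg : ∀ a ∈ m, -a ∈ m := by
    intro a ha
    have := hm_smul (-1) (D.neg_mem D.one_mem) a ha
    simpa using this
  have hm_subm : ∀ a ∈ m, ∀ b ∈ m, a - b ∈ m := by
    intro a ha b hb
    have := hm_add a ha (-b) (hm_neg b hb)
    simpa [sub_eq_add_neg] using this
  -- 1 ∉ m
  have h1m : (1 : T) ∉ m := by
    intro h
    apply hmne
    refine Set.Subset.antisymm hm_sub ?_
    intro d hd
    have := hm_smul d hd 1 h
    simpa using this
  -- m ∩ L = {0}
  have hmL : ∀ a ∈ m, a ∈ (L : Set T) → a = 0 := by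
    intro a ha haL
    by_contra h
    obtain ⟨b, hbL, hab⟩ := hLfield a haL h
    have : b * a ∈ m := hm_smul b (hLD hbL) a ha
    rw [mul_comm, hab] at this
    exact h1m this
  -- R ⊆ D
  have hRD : (R : Set T) ⊆ (D : Set T) := by
    intro x hx
    rw [hRcar] at hx
    obtain ⟨k, hk, y, hy, rfl⟩ := hx
    exact D.add_mem (hLD (hKL hk)) (hm_sub hy)
  -- m ⊆ R
  have hmR : m ⊆ (R : Set T) := by
    intro y hy
    rw [hRcar]
    exact ⟨0, K.zero_mem, y, hy, (zero_add y).symm⟩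
  have hKsubL : (K : Set T) ⊆ (L : Set T) := fun x hx => hKL hx
  refine ⟨?_, ?_, ?_, ?_⟩
  · -- D = R · D^×
    intro d hd
    obtain ⟨l, hl, x, hx, rfl⟩ := hDsum d hd
    by_cases hl0 : l = 0
    · refine ⟨l + x, ?_, 1, ⟨D.one_mem, 1, D.one_mem, mul_one 1⟩, (mul_one _).symm⟩
      subst hl0
      rw [zero_add]
      exact hmR hx
    · obtain ⟨l', hl', hll'⟩ := hLfield l hl hl0
      refine ⟨1 + l' * x, ?_, l, ⟨hLD hl, l', hLD hl', hll'⟩, ?_⟩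
      · rw [hRcar]
        exact ⟨1, K.one_mem, l' * x, hm_smul l' (hLD hl') x hx, rfl⟩
      · linear_combination (-x) * hll'
  · -- D^× ∩ R = R^×
    apply Set.Subset.antisymm
    · rintro x ⟨⟨hxD, w, hwD, hxw⟩, hxR⟩
      obtain ⟨l, hlL, z, hz, hw⟩ := hDsum w hwD
      have hxR' := hxR
      rw [hRcar] at hxR'
      obtain ⟨k, hk, y, hy, hx⟩ := hxR'
      -- k * l - 1 ∈ m
      have hmem1 : k * z ∈ m := hm_smul k (hLD (hKL hk)) z hz
      have hmem2 : y * l ∈ m := by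
        have := hm_smul l (hLD hlL) y hy
        rwa [mul_comm] at this
      have hmem3 : y * z ∈ m := hm_smul y (hm_sub hy) z hz
      have hsum : k * z + y * l + y * z ∈ m :=
        hm_add _ (hm_add _ hmem1 _ hmem2) _ hmem3
      have hkl1 : k * l - 1 ∈ m := by
        have heq : k * l - 1 = -(k * z + y * l + y * z) := by
          have : (k + y) * (l + z) = 1 := by rw [← hx, ← hw]; exact hxw
          linear_combination this
        rw [heq]
        exact hm_neg _ hsum
      have hklL : k * l - 1 ∈ (L : Set T) :=
        L.sub_mem (L.mul_mem (hKL hk) hlL) L.one_mem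
      have hkl : k * l = 1 := sub_eq_zero.mp (hmL _ hkl1 hklL)
      have hk0 : k ≠ 0 := by
        intro h
        rw [h, zero_mul] at hkl
        exact zero_ne_one hkl
      obtain ⟨k', hk', hkk'⟩ := hKfield k hk hk0
      have hlk' : l = k' := by
        have : l * (k * k') = (k * l) * k' := by ring
        rw [hkk', hkl, mul_one, one_mul] at this
        exact this
      refine ⟨hxR, w, ?_, hxw⟩
      rw [hRcar]
      exact ⟨k', hk', z, hz, by rw [hw, hlk']⟩
    · rintro x ⟨hxR, y, hyR, hxy⟩
      exact ⟨⟨hRD hxR, y, hRD hyR, hxy⟩, hxR⟩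
  · -- conductor R D = m
    apply Set.Subset.antisymm
    · intro x hx
      have hxR : x ∈ (R : Set T) := by
        have := hx 1 D.one_mem
        simpa using this
      rw [hRcar] at hxR
      obtain ⟨k, hk, y, hy, rfl⟩ := hxR
      by_cases hk0 : k = 0
      · subst hk0; rw [zero_add]; exact hy
      · exfalso
        have hne : ¬ (L : Set T) ⊆ (K : Set T) := fun h =>
          hKne (Set.Subset.antisymm hKsubL h)
        obtain ⟨l0, hl0L, hl0K⟩ := Set.not_subset.mp hne
        have hxl0 : (k + y) * l0 ∈ (R : Set T) := hx l0 (hLD hl0L)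
        rw [hRcar] at hxl0
        obtain ⟨k2, hk2, y2, hy2, heq⟩ := hxl0
        have hyl0 : y * l0 ∈ m := by
          have := hm_smul l0 (hLD hl0L) y hy
          rwa [mul_comm] at this
        have hdiff : k * l0 - k2 ∈ m := by
          have heq2 : k * l0 - k2 = y2 - y * l0 := by linear_combination heq
          rw [heq2]
          exact hm_subm _ hy2 _ hyl0
        have hdiffL : k * l0 - k2 ∈ (L : Set T) :=
          L.sub_mem (L.mul_mem (hKL hk) hl0L) (hKL hk2)
        have hkl0 : k * l0 = k2 := sub_eq_zero.mp (hmL _ hdiff hdiffL)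
        obtain ⟨k', hk', hkk'⟩ := hKfield k hk hk0
        have : l0 = k' * k2 := by
          have h1 : (k * k') * l0 = k' * (k * l0) := by ring
          rw [hkk', one_mul, hkl0] at h1
          exact h1
        rw [this] at hl0K
        exact hl0K (K.mul_mem hk' hk2)
    · intro x hx d hd
      have : d * x ∈ m := hm_smul d hd x hx
      rw [mul_comm] at this
      exact hmR this
  · -- m is a maximal ideal of R
    refine ⟨⟨⟨hm0mem, hm_add, fun r hr x hx => hm_smul r (hRD hr) x hx⟩, hmR⟩, ?_, ?_⟩
    · intro h
      exact h1m (h ▸ R.one_mem : (1 : T) ∈ m)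
    · rintro J ⟨⟨hJ0, hJadd, hJsmul⟩, hJsub⟩ hmJ hJne
      refine Set.Subset.antisymm ?_ hmJ
      intro x hxJ
      by_contra hxm
      have hxR := hJsub hxJ
      rw [hRcar] at hxR
      obtain ⟨k, hk, y, hy, rfl⟩ := hxR
      have hk0 : k ≠ 0 := by
        intro h
        apply hxm
        rw [h, zero_add]
        exact hy
      have hkJ : k ∈ J := by
        have := hJadd _ hxJ _ (hmJ (hm_neg y hy))
        simpa using this
      obtain ⟨k', hk', hkk'⟩ := hKfield k hk hk0
      have hk'R : k' ∈ (R : Set T) := by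
        rw [hRcar]
        exact ⟨k', hk', 0, hm0mem, (add_zero _).symm⟩
      have h1J : (1 : T) ∈ J := by
        have := hJsmul k' hk'R k hkJ
        rwa [mul_comm, hkk'] at this
      apply hJne
      refine Set.Subset.antisymm hJsub ?_
      intro r hr
      have := hJsmul r hr 1 h1J
      rwa [mul_one] at this

end Paper
end

section
/- Let D be a commutative ring, m ≠ {0} a maximal ideal of D, and L ⊆ D a subring that is a field with D = L + m. Let K ⊊ L be a subring of L that is a field, and set R = K + m. If T(R) = T(D), then the inclusion R^• ↪ D^• is a transfer homomorphism. -/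
namespace Paper

theorem regP_of_unit {T : Type*} [CommRing T] {A : Set T} {x y : T}
    (hx : x ∈ A) (h : x * y = 1) : x ∈ reg A := by
  refine ⟨hx, fun z hz h0 => ?_⟩
  have hzz : z = y * (x * z) := by linear_combination (-z) * h
  rw [h0, mul_zero] at hzz
  exact hzz

theorem regS_mul {T : Type*} [CommRing T] {S : Subring T} {a b : T}
    (ha : a ∈ reg (S : Set T)) (hb : b ∈ reg (S : Set T)) : a * b ∈ reg (S : Set T) := by
  refine ⟨mul_mem ha.1 hb.1, fun z hz h0 => ?_⟩
  have h1 : a * (b * z) = 0 := by rw [← mul_assoc]; exact h0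
  exact hb.2 z hz (ha.2 (b * z) (mul_mem hb.1 hz) h1)

theorem reg_mono {T : Type*} [CommRing T] {A B : Set T} (hAB : A ⊆ B) {x : T}
    (hxB : x ∈ reg B) (hxA : x ∈ A) : x ∈ reg A :=
  ⟨hxA, fun y hy => hxB.2 y (hAB hy)⟩

/-- the `D + M` construction: in the setting of the `D + M`
construction with `T(R) = T(D)`, the inclusion `R^• ↪ D^•` is a transfer
homomorphism. -/
theorem stmt9 {T : Type*} [CommRing T] [Nontrivial T] (D : Subring T)
    (hDreg : ∀ x ∈ reg (D : Set T), IsUnit x)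
    (hDfr : ∀ t : T, ∃ d ∈ (D : Set T), ∃ s ∈ reg (D : Set T), t * s = d)
    (m : Set T) (hmax : IsMaxIdealOf D m) (hm0 : m ≠ ({0} : Set T))
    (L K R : Subring T) (hLD : L ≤ D)
    (hLfield : ∀ x ∈ (L : Set T), x ≠ 0 → ∃ y ∈ (L : Set T), x * y = 1)
    (hKL : K ≤ L) (hKne : (K : Set T) ≠ (L : Set T))
    (hKfield : ∀ x ∈ (K : Set T), x ≠ 0 → ∃ y ∈ (K : Set T), x * y = 1)
    (hDsum : ∀ d ∈ (D : Set T), ∃ l ∈ (L : Set T), ∃ x ∈ m, d = l + x)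
    (hRcar : (R : Set T) = {x : T | ∃ k ∈ (K : Set T), ∃ y ∈ m, x = k + y})
    (hRreg : reg (R : Set T) ⊆ reg (D : Set T))
    (hRfr : ∀ t : T, ∃ r ∈ (R : Set T), ∃ s ∈ reg (R : Set T), t * s = r) :
    IsTransferIncl (reg (R : Set T)) (reg (D : Set T)) := by
  obtain ⟨⟨⟨hm0mem, hmadd, hmsmul⟩, hmD⟩, hmne, -⟩ := hmax
  have hKD : ∀ x, x ∈ (K : Set T) → x ∈ (D : Set T) := fun x hx => hLD (hKL hx)
  have hmR : ∀ x, x ∈ m → x ∈ (R : Set T) := by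
    intro x hx
    rw [hRcar]
    exact ⟨0, K.zero_mem, x, hx, (zero_add x).symm⟩
  have hKR : ∀ k, k ∈ (K : Set T) → k ∈ (R : Set T) := by
    intro k hk
    rw [hRcar]
    exact ⟨k, hk, 0, hm0mem, (add_zero k).symm⟩
  have hRD : (R : Set T) ⊆ (D : Set T) := by
    rw [hRcar]
    rintro x ⟨k, hk, y, hy, rfl⟩
    exact add_mem (hKD k hk) (hmD hy)
  have h1m : (1 : T) ∉ m := by
    intro h1
    refine hmne (Set.Subset.antisymm hmD fun d hd => ?_)
    have := hmsmul d hd 1 h1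
    simpa using this
  have hmL : ∀ l, l ∈ (L : Set T) → l ∈ m → l = 0 := by
    intro l hl hlm
    by_contra h0
    obtain ⟨y, hy, hly⟩ := hLfield l hl h0
    have : y * l ∈ m := hmsmul y (hLD hy) l hlm
    rw [mul_comm, hly] at this
    exact h1m this
  have huniq : ∀ l, l ∈ (L : Set T) → ∀ x, x ∈ m → l + x ∈ (R : Set T) → l ∈ (K : Set T) := by
    intro l hl x hx hlx
    rw [hRcar] at hlx
    obtain ⟨k, hk, y, hy, heq⟩ := hlx
    have hsub : l - k ∈ m := by
      have h2 : l - k = y + (-1) * x := by linear_combination heq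
      rw [h2]
      exact hmadd y hy _ (hmsmul (-1) (neg_mem D.one_mem) x hx)
    have h3 : l - k = 0 := hmL _ (sub_mem hl (hKL hk)) hsub
    have h4 : l = k := by linear_combination h3
    rwa [h4]
  have hunitD : ∀ l li : T, l ∈ (L : Set T) → li ∈ (L : Set T) → l * li = 1 →
      l ∈ unitsIn (reg (D : Set T)) := by
    intro l li hl hli h
    exact ⟨regP_of_unit (hLD hl) h, li,
      regP_of_unit (hLD hli) (show li * l = 1 by linear_combination h), h⟩
  have hdecomp : ∀ d, d ∈ reg (D : Set T) →
      ∃ β, β ∈ reg (R : Set T) ∧ ∃ l li, l ∈ (L : Set T) ∧ li ∈ (L : Set T) ∧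
        l * li = 1 ∧ d = l * β ∧ (β ∈ m ∨ ∃ y ∈ m, β = 1 + y) := by
    intro d hd
    obtain ⟨l0, hl0, x, hx, hdeq⟩ := hDsum d hd.1
    by_cases h0 : l0 = 0
    · subst h0
      rw [zero_add] at hdeq
      have hdm : d ∈ m := hdeq ▸ hx
      exact ⟨d, reg_mono hRD hd (hmR d hdm), 1, 1, L.one_mem, L.one_mem, mul_one 1,
        (one_mul d).symm, Or.inl hdm⟩
    · obtain ⟨li0, hli0, hinv⟩ := hLfield l0 hl0 h0
      have hmx : li0 * x ∈ m := hmsmul li0 (hLD hli0) x hx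
      have hβR : (1 + li0 * x) ∈ (R : Set T) := by
        rw [hRcar]
        exact ⟨1, K.one_mem, li0 * x, hmx, rfl⟩
      have hdβ : d = l0 * (1 + li0 * x) := by linear_combination hdeq + (-x) * hinv
      have hβregD : (1 + li0 * x) ∈ reg (D : Set T) := by
        refine ⟨hRD hβR, fun z hz hz0 => ?_⟩
        have : d * z = 0 := by rw [hdβ, mul_assoc, hz0, mul_zero]
        exact hd.2 z hz this
      exact ⟨1 + li0 * x, reg_mono hRD hβregD hβR, l0, li0, hl0, hli0, hinv, hdβ,
        Or.inr ⟨li0 * x, hmx, rfl⟩⟩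
  refine ⟨?_, ?_, ?_⟩
  · -- T1 part 1
    ext x
    constructor
    · intro hx
      obtain ⟨β, hβ, l, li, hl, hli, hinv, heq, -⟩ := hdecomp x hx
      exact ⟨β, hβ, l, hunitD l li hl hli hinv, by rw [heq]; ring⟩
    · rintro ⟨a, ha, u, hu, rfl⟩
      exact regS_mul (hRreg ha) hu.1
  · -- T1 part 2
    ext x
    constructor
    · rintro ⟨hxH, hxB⟩
      obtain ⟨hxD, y, hy, hxy⟩ := hxB
      have hxR : x ∈ (R : Set T) := hxH.1
      rw [hRcar] at hxR
      obtain ⟨k, hk, z, hz, hxeq⟩ := hxR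
      have hk0 : k ≠ 0 := by
        rintro rfl
        rw [zero_add] at hxeq
        have h1 : (1 : T) ∈ m := by
          have : y * x ∈ m := hmsmul y hy.1 x (hxeq ▸ hz)
          rwa [mul_comm, hxy] at this
        exact h1m h1
      obtain ⟨ki, hki, hkki⟩ := hKfield k hk hk0
      obtain ⟨l', hl', x', hx', hky⟩ := hDsum (k * y) (mul_mem (hKD k hk) hy.1)
      have h1l' : (1 : T) - l' ∈ m := by
        have heq2 : (1 : T) - l' = x' + y * z := by
          linear_combination -hxy + y * hxeq + hky
        rw [heq2]
        exact hmadd x' hx' _ (hmsmul y hy.1 z hz)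
      have hl'1 : l' = 1 := by
        have := hmL _ (sub_mem L.one_mem hl') h1l'
        linear_combination -this
      have hkyR : k * y ∈ (R : Set T) := by
        rw [hRcar]
        exact ⟨1, K.one_mem, x', hx', by rw [hky, hl'1]⟩
      have hxinv : x * (ki * (k * y)) = 1 := by
        linear_combination (x * y) * hkki + hxy
      have hinvR : ki * (k * y) ∈ (R : Set T) := mul_mem (hKR ki hki) hkyR
      have hinvreg : ki * (k * y) ∈ reg (R : Set T) :=
        regP_of_unit hinvR (show ki * (k * y) * x = 1 by linear_combination hxinv)
      exact ⟨hxH, ki * (k * y), hinvreg, hxinv⟩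
    · rintro ⟨hxR, y, hy, hxy⟩
      exact ⟨hxR, hRreg hxR, y, hRreg hy, hxy⟩
  · -- T2
    intro u hu b hb c hc hubc
    obtain ⟨βb, hβb, lb, lib, hlb, hlib, hinvb, hbeq, hcaseb⟩ := hdecomp b hb
    obtain ⟨βc, hβc, lc, lic, hlc, hlic, hinvc, hceq, hcasec⟩ := hdecomp c hc
    rcases hcasec with hβcm | ⟨yc, hyc, hβceq⟩
    · -- c-part lies in m : take v = βb, w = c * lb
      have hwm : c * lb ∈ m := by
        have h5 : c * lb = (lc * lb) * βc := by rw [hceq]; ring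
        rw [h5]
        exact hmsmul _ (mul_mem (hLD hlc) (hLD hlb)) βc hβcm
      have hwregD : c * lb ∈ reg (D : Set T) :=
        regS_mul hc (hunitD lb lib hlb hlib hinvb).1
      refine ⟨βb, hβb, c * lb, reg_mono hRD hwregD (hmR _ hwm), lib,
        hunitD lib lb hlib hlb (by linear_combination hinvb), lb,
        hunitD lb lib hlb hlib hinvb, ?_, ?_, rfl⟩
      · rw [hubc, hbeq]; ring
      · rw [hbeq]; linear_combination (-βb) * hinvb
    · -- βc = 1 + yc : take v = b * lc, w = βc
      have hwv : βc = c * lic := by rw [hceq]; linear_combination (-βc) * hinvc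
      have hvregD : b * lc ∈ reg (D : Set T) :=
        regS_mul hb (hunitD lc lic hlc hlic hinvc).1
      have hvR : b * lc ∈ (R : Set T) := by
        rcases hcaseb with hβbm | ⟨yb, hyb, hβbeq⟩
        · have h6 : b * lc = (lb * lc) * βb := by rw [hbeq]; ring
          rw [h6]
          exact hmR _ (hmsmul _ (mul_mem (hLD hlb) (hLD hlc)) βb hβbm)
        · have hmm : yb + yc + yb * yc ∈ m :=
            hmadd _ (hmadd yb hyb yc hyc) _ (hmsmul yb (hmD hyb) yc hyc)
          have hkK : lb * lc ∈ (K : Set T) := by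
            apply huniq _ (mul_mem hlb hlc) ((lb * lc) * (yb + yc + yb * yc))
              (hmsmul _ (mul_mem (hLD hlb) (hLD hlc)) _ hmm)
            have h7 : lb * lc + (lb * lc) * (yb + yc + yb * yc) = u := by
              rw [hubc, hbeq, hceq, hβbeq, hβceq]; ring
            rw [h7]
            exact hu.1
          have h8 : b * lc = βb * (lb * lc) := by rw [hbeq]; ring
          rw [h8]
          exact mul_mem hβb.1 (hKR _ hkK)
      refine ⟨b * lc, reg_mono hRD hvregD hvR, βc, hβc, lc,
        hunitD lc lic hlc hlic hinvc, lic,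
        hunitD lic lc hlic hlc (by linear_combination hinvc), ?_, rfl, hwv⟩
      rw [hubc, hceq]; ring

end Paper
end

section
/- Let R be a noetherian commutative ring having exactly one regular prime ideal. Then R is strongly primary: for every a ∈ R^• ∖ R^× there exists n ∈ ℕ such that every product of n elements of R^• ∖ R^× lies in a·R^•. -/
namespace Paper

/-- a noetherian commutative ring with exactly one regular prime
ideal is strongly primary: `R^• ≠ R^×` and for every regular non-unit `a` there
is `n ∈ ℕ` such that every product of `n` regular non-units lies in `a·R^•`. -/
theorem stmt14 {R : Type*} [CommRing R] [Nontrivial R] [IsNoetherianRing R]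
    (huniq : ∃! P : Ideal R, P.IsPrime ∧ ∃ x ∈ P, x ∈ nonZeroDivisors R) :
    (∃ a : R, a ∈ nonZeroDivisors R ∧ ¬ IsUnit a) ∧
    ∀ a ∈ nonZeroDivisors R, ¬ IsUnit a →
      ∃ n : ℕ, 0 < n ∧ ∀ f : Fin n → R,
        (∀ i, f i ∈ nonZeroDivisors R ∧ ¬ IsUnit (f i)) →
          ∃ h ∈ nonZeroDivisors R, (∏ i, f i) = a * h := by
  obtain ⟨P, ⟨hP, x, hxP, hxreg⟩, huniq'⟩ := huniq
  have hmem : ∀ a ∈ nonZeroDivisors R, ¬ IsUnit a → a ∈ P := by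
    intro a ha hau
    obtain ⟨M, hM, haM⟩ := Ideal.exists_le_maximal (Ideal.span {a}) (by
      simpa [Ideal.span_singleton_eq_top] using hau)
    have haM' : a ∈ M := haM (Ideal.subset_span rfl)
    have : M = P := huniq' M ⟨hM.isPrime, a, haM', ha⟩
    exact this ▸ haM'
  have hxu : ¬ IsUnit x := fun h => hP.ne_top (Ideal.eq_top_of_isUnit_mem _ hxP h)
  refine ⟨⟨x, hxreg, hxu⟩, ?_⟩
  intro a ha hau
  have hrad : P ≤ (Ideal.span {a}).radical := by
    rw [Ideal.radical_eq_sInf]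
    refine le_sInf ?_
    rintro J ⟨hJle, hJp⟩
    exact (huniq' J ⟨hJp, a, hJle (Ideal.subset_span rfl), ha⟩).ge
  obtain ⟨n, hn⟩ := Ideal.exists_pow_le_of_le_radical_of_fg hrad (IsNoetherian.noetherian P)
  refine ⟨n + 1, Nat.succ_pos n, ?_⟩
  intro f hf
  have hprod : (∏ i, f i) ∈ P ^ (n + 1) := by
    have : (∏ i : Fin (n + 1), f i) ∈ ∏ _i : Fin (n + 1), P :=
      Ideal.prod_mem_prod fun i _ => hmem _ (hf i).1 (hf i).2
    simpa using this
  have hmemspan : (∏ i, f i) ∈ Ideal.span {a} :=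
    (le_trans (Ideal.pow_le_pow_right (Nat.le_succ n)) hn) hprod
  obtain ⟨h, hh⟩ := Ideal.mem_span_singleton'.mp hmemspan
  have hprodreg : (∏ i, f i) ∈ nonZeroDivisors R :=
    Submonoid.prod_mem _ fun i _ => (hf i).1
  have hah : a * h ∈ nonZeroDivisors R := by
    rw [mul_comm]; rw [hh]; exact hprodreg
  exact ⟨h, (mul_mem_nonZeroDivisors.mp hah).2, by rw [← hh, mul_comm]⟩

end Paper
end
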